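/- arXiv:2106.09213 — 4 statements merged into one kernel-verified Lean document; each statement's English description precedes it below -/
import Mathlib

section
/- Let J ⊆ ℝ be a closed interval of length at most π, and let g : J → ℝ be continuously differentiable with sup_{x∈J} (g(x)² + g'(x)²) < 1. Then the function w(x) = g(x) − sin(x) has at most two zeros on J, counting multiplicity (i.e., either w has at most two distinct zeros, all simple, or at most one zero which is at most a double zero; equivalently, there do not exist points witnessing three zeros counted with multiplicity). -/
open Real Set Filter Topology


/-- `cos` stays positive between two points of positivity at distance `≤ π`. -/
lemma aux_cos_pos_between {s u : ℝ} (hsu : s ≤ u) (hlen : u - s ≤ π)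
    (hs : 0 < Real.cos s) (hu : 0 < Real.cos u) : ∀ t ∈ Icc s u, 0 < Real.cos t := by
  have hπ : (0:ℝ) < π := Real.pi_pos
  set k : ℤ := round (s / (2 * π)) with hk
  have hround := abs_sub_le_iff.1 (abs_sub_round (s / (2 * π)))
  have h2π : (0:ℝ) < 2 * π := by linarith
  have h2πne : (2:ℝ) * π ≠ 0 := ne_of_gt h2π
  have h1 := mul_le_mul_of_nonneg_right hround.1 h2π.le
  have h2 := mul_le_mul_of_nonneg_right hround.2 h2π.le
  rw [sub_mul, div_mul_cancel₀ _ h2πne] at h1 h2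
  -- s' = s - k * (2π)
  set s' : ℝ := s - k * (2 * π) with hs'
  set u' : ℝ := u - k * (2 * π) with hu'
  have hcs : Real.cos s' = Real.cos s := by
    rw [hs']; rw [show s - (k:ℝ) * (2 * π) = s + (-k : ℤ) * (2 * π) by push_cast; ring]
    exact Real.cos_add_int_mul_two_pi s (-k)
  have hcu : Real.cos u' = Real.cos u := by
    rw [hu']; rw [show u - (k:ℝ) * (2 * π) = u + (-k : ℤ) * (2 * π) by push_cast; ring]
    exact Real.cos_add_int_mul_two_pi u (-k)
  have hs'range : -π ≤ s' ∧ s' ≤ π := by constructor <;> [linarith; linarith]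
  have hs'lt : s' < π / 2 := by
    by_contra hcon
    push_neg at hcon
    have : Real.cos s' ≤ 0 := Real.cos_nonpos_of_pi_div_two_le_of_le hcon (by linarith)
    rw [hcs] at this; linarith
  have hs'gt : -(π / 2) < s' := by
    by_contra hcon
    push_neg at hcon
    have h3 : Real.cos (-s') ≤ 0 :=
      Real.cos_nonpos_of_pi_div_two_le_of_le (by linarith) (by linarith)
    rw [Real.cos_neg, hcs] at h3; linarith
  have hu'lt : u' < π / 2 := by
    by_contra hcon
    push_neg at hcon
    have : Real.cos u' ≤ 0 := Real.cos_nonpos_of_pi_div_two_le_of_le hcon (by linarith)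
    rw [hcu] at this; linarith
  intro t ht
  have hct : Real.cos (t - k * (2 * π)) = Real.cos t := by
    rw [show t - (k:ℝ) * (2 * π) = t + (-k : ℤ) * (2 * π) by push_cast; ring]
    exact Real.cos_add_int_mul_two_pi t (-k)
  rw [← hct]
  apply Real.cos_pos_of_mem_Ioo
  constructor
  · have := ht.1; simp only [hs'] at hs'gt; linarith
  · have := ht.2; simp only [hu'] at hu'lt; linarith


lemma aux_neg_right {w : ℝ → ℝ} {d x : ℝ} (h : HasDerivAt w d x) (hd : d < 0)
    (hw : w x = 0) : ∀ᶠ t in 𝓝[>] x, w t < 0 := by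
  have hs : Tendsto (slope w x) (𝓝[≠] x) (𝓝 d) := hasDerivAt_iff_tendsto_slope.1 h
  have hs' : Tendsto (slope w x) (𝓝[>] x) (𝓝 d) :=
    hs.mono_left (nhdsWithin_mono x fun t ht => ne_of_gt ht)
  have hev : ∀ᶠ t in 𝓝[>] x, slope w x t < 0 := hs'.eventually (eventually_lt_nhds hd)
  filter_upwards [hev, self_mem_nhdsWithin] with t ht (htx : t ∈ Ioi x)
  rw [slope_def_field, hw, sub_zero] at ht
  have h1 : 0 < t - x := sub_pos.2 htx
  by_contra hcon
  push_neg at hcon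
  exact absurd (div_nonneg hcon h1.le) (not_le.2 ht)

lemma aux_nonneg_left {w : ℝ → ℝ} {d x ζ : ℝ} (hx : x < ζ) (h : HasDerivAt w d ζ)
    (h0 : w ζ = 0) (hneg : ∀ t ∈ Set.Ioo x ζ, w t < 0) : 0 ≤ d := by
  have hs : Tendsto (slope w ζ) (𝓝[≠] ζ) (𝓝 d) := hasDerivAt_iff_tendsto_slope.1 h
  have hs' : Tendsto (slope w ζ) (𝓝[<] ζ) (𝓝 d) :=
    hs.mono_left (nhdsWithin_mono ζ fun t ht => ne_of_lt ht)
  refine ge_of_tendsto hs' ?_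
  have hmem : Set.Ioo x ζ ∈ 𝓝[<] ζ := Ioo_mem_nhdsLT_of_mem ⟨hx, le_refl ζ⟩
  filter_upwards [hmem] with t ht
  rw [slope_def_field, h0, sub_zero]
  have h1 : t - ζ < 0 := sub_neg.2 ht.2
  have h2 : w t < 0 := hneg t ht
  exact le_of_lt (div_pos_of_neg_of_neg h2 h1)

/-- There cannot be two zeros of `w` on `[x,y]` if the derivative of `w`
is strictly negative at every zero in `[x,y]`. -/
lemma aux_no_two {w w' : ℝ → ℝ} {x y : ℝ} (hxy : x < y)
    (hd : ∀ t ∈ Icc x y, HasDerivAt w (w' t) t)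
    (hx : w x = 0) (hy : w y = 0)
    (hz : ∀ t ∈ Icc x y, w t = 0 → w' t < 0) : False := by
  have hwcont : ContinuousOn w (Icc x y) := fun t ht => (hd t ht).continuousAt.continuousWithinAt
  have hwx : w' x < 0 := hz x ⟨le_refl x, hxy.le⟩ hx
  have hev := aux_neg_right (hd x ⟨le_refl x, hxy.le⟩) hwx hx
  obtain ⟨u, hu, hsub⟩ := mem_nhdsGT_iff_exists_Ioc_subset.1 hev
  set c : ℝ := min u ((x + y) / 2) with hc
  have hxc : x < c := lt_min hu (by linarith)
  have hcy : c < y := lt_of_le_of_lt (min_le_right _ _) (by linarith)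
  have hIocc : ∀ t ∈ Set.Ioc x c, w t < 0 := fun t ht =>
    hsub ⟨ht.1, ht.2.trans (min_le_left _ _)⟩
  have hwc : w c < 0 := hIocc c ⟨hxc, le_refl c⟩
  set S : Set ℝ := Icc c y ∩ w ⁻¹' {0} with hS
  have hScl : IsClosed S := by
    apply ContinuousOn.preimage_isClosed_of_isClosed _ isClosed_Icc isClosed_singleton
    exact hwcont.mono (Icc_subset_Icc hxc.le (le_refl y))
  have hSne : S.Nonempty := ⟨y, ⟨hcy.le, le_refl y⟩, hy⟩
  have hSbdd : BddBelow S := ⟨c, fun t ht => ht.1.1⟩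
  set ζ : ℝ := sInf S with hζ
  have hζS : ζ ∈ S := hScl.csInf_mem hSne hSbdd
  have hζ0 : w ζ = 0 := hζS.2
  have hcζ : c < ζ := lt_of_le_of_ne hζS.1.1 (by intro heq; rw [← heq] at hζ0; exact absurd hζ0 (ne_of_lt hwc))
  have hζy : ζ ≤ y := hζS.1.2
  have hxζ : x < ζ := hxc.trans hcζ
  have hneg : ∀ t ∈ Set.Ioo x ζ, w t < 0 := by
    intro t ht
    rcases le_or_gt t c with htc | htc
    · exact hIocc t ⟨ht.1, htc⟩
    · by_contra hcon
      push_neg at hcon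
      rcases eq_or_lt_of_le hcon with heq | hlt
      · exact absurd (csInf_le hSbdd ⟨⟨htc.le, ht.2.le.trans hζy⟩, heq.symm⟩)
          (not_le.2 ht.2)
      · have hct : c ≤ t := htc.le
        have : (0:ℝ) ∈ Icc (w c) (w t) := ⟨hwc.le, hlt.le⟩
        obtain ⟨r, hr, hr0⟩ := intermediate_value_Icc hct
          (hwcont.mono (Icc_subset_Icc hxc.le (ht.2.le.trans hζy))) this
        have hrS : r ∈ S := ⟨⟨hr.1, (hr.2.trans ht.2.le).trans hζy⟩, hr0⟩
        exact absurd (csInf_le hSbdd hrS) (not_le.2 (lt_of_le_of_lt hr.2 ht.2))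
  have h1 : 0 ≤ w' ζ := aux_nonneg_left hxζ (hd ζ ⟨hxζ.le, hζy⟩) hζ0 hneg
  exact absurd (hz ζ ⟨hxζ.le, hζy⟩ hζ0) (not_lt.2 h1)


theorem stmt_0 (a b : ℝ) (hab : a ≤ b) (hlen : b - a ≤ π)
    (g g' : ℝ → ℝ)
    (hcont : ContinuousOn g' (Icc a b))
    (hderiv : ∀ x ∈ Icc a b, HasDerivAt g (g' x) x)
    (hsmall : ∀ x ∈ Icc a b, g x ^ 2 + g' x ^ 2 < 1) :
    (¬ ∃ x y z, x ∈ Icc a b ∧ y ∈ Icc a b ∧ z ∈ Icc a b ∧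
      x ≠ y ∧ x ≠ z ∧ y ≠ z ∧
      g x - Real.sin x = 0 ∧ g y - Real.sin y = 0 ∧ g z - Real.sin z = 0) ∧
    (¬ ∃ x y, x ∈ Icc a b ∧ y ∈ Icc a b ∧ x ≠ y ∧
      g x - Real.sin x = 0 ∧ g' x - Real.cos x = 0 ∧ g y - Real.sin y = 0) := by
  -- At every zero of `g - sin`, we have `(g' - cos) * cos < 0`.
  have key : ∀ ζ ∈ Icc a b, g ζ - Real.sin ζ = 0 →
      (g' ζ - Real.cos ζ) * Real.cos ζ < 0 := by
    intro ζ hζ he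
    have h := hsmall ζ hζ
    have hgs : g ζ = Real.sin ζ := sub_eq_zero.1 he
    have hsc := Real.sin_sq_add_cos_sq ζ
    have hlt : g' ζ ^ 2 < Real.cos ζ ^ 2 := by rw [hgs] at h; linarith
    rcases lt_trichotomy (Real.cos ζ) 0 with hc | hc | hc
    · nlinarith
    · nlinarith [sq_nonneg (g' ζ)]
    · nlinarith
  have hd : ∀ t ∈ Icc a b, HasDerivAt (fun s => g s - Real.sin s)
      (g' t - Real.cos t) t := fun t ht => (hderiv t ht).sub (Real.hasDerivAt_sin t)
  -- Ordered pair lemma: two zeros have cosines of opposite sign.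
  have L : ∀ x ∈ Icc a b, ∀ y ∈ Icc a b, x < y →
      g x - Real.sin x = 0 → g y - Real.sin y = 0 →
      Real.cos x * Real.cos y < 0 := by
    intro x hx y hy hxy ex ey
    by_contra hcon
    push_neg at hcon
    have hkx := key x hx ex
    have hky := key y hy ey
    have hcx : Real.cos x ≠ 0 := by intro h0; rw [h0, mul_zero] at hkx; exact lt_irrefl 0 hkx
    have hcy : Real.cos y ≠ 0 := by intro h0; rw [h0, mul_zero] at hky; exact lt_irrefl 0 hky
    have hsubI : Icc x y ⊆ Icc a b := Icc_subset_Icc hx.1 hy.2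
    have hlen' : y - x ≤ π := by
      have := hx.1; have := hy.2; linarith
    rcases hcx.lt_or_gt with hx0 | hx0 <;> rcases hcy.lt_or_gt with hy0 | hy0
    · -- both negative
      have hcosneg : ∀ t ∈ Icc x y, Real.cos t < 0 := by
        have hpos := aux_cos_pos_between (s := x + π) (u := y + π)
          (by linarith) (by linarith)
          (by rw [Real.cos_add_pi]; linarith)
          (by rw [Real.cos_add_pi]; linarith)
        intro t ht
        have := hpos (t + π) ⟨by linarith [ht.1], by linarith [ht.2]⟩
        rw [Real.cos_add_pi] at this; linarith
      refine aux_no_two (w := fun s => -(g s - Real.sin s))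
        (w' := fun s => -(g' s - Real.cos s)) hxy
        (fun t ht => (hd t (hsubI ht)).neg) (by simp [ex]) (by simp [ey]) ?_
      intro t ht h0
      have h0' : g t - Real.sin t = 0 := by
        have h0'' : -(g t - Real.sin t) = 0 := h0
        linarith [neg_eq_zero.1 h0'']
      have hk := key t (hsubI ht) h0'
      have hct := hcosneg t ht
      by_contra hge
      push_neg at hge
      nlinarith
    · exact absurd (mul_neg_of_neg_of_pos hx0 hy0) (not_lt.2 hcon)
    · exact absurd (mul_neg_of_pos_of_neg hx0 hy0) (not_lt.2 hcon)
    · -- both positive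
      have hcospos := aux_cos_pos_between hxy.le hlen' hx0 hy0
      refine aux_no_two (w := fun s => g s - Real.sin s)
        (w' := fun s => g' s - Real.cos s) hxy
        (fun t ht => hd t (hsubI ht)) ex ey ?_
      intro t ht h0
      have hk := key t (hsubI ht) h0
      have hct := hcospos t ht
      by_contra hge
      push_neg at hge
      nlinarith
  have L' : ∀ x ∈ Icc a b, ∀ y ∈ Icc a b, x ≠ y →
      g x - Real.sin x = 0 → g y - Real.sin y = 0 →
      Real.cos x * Real.cos y < 0 := by
    intro x hx y hy hne ex ey
    rcases hne.lt_or_gt with h | h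
    · exact L x hx y hy h ex ey
    · rw [mul_comm]; exact L y hy x hx h ey ex
  constructor
  · rintro ⟨x, y, z, hx, hy, hz, hxy, hxz, hyz, ex, ey, ez⟩
    have c1 := L' x hx y hy hxy ex ey
    have c2 := L' x hx z hz hxz ex ez
    have c3 := L' y hy z hz hyz ey ez
    nlinarith [mul_pos (neg_pos.2 c1) (neg_pos.2 c2), sq_nonneg (Real.cos x)]
  · rintro ⟨x, y, hx, hy, hxy, e1, e2, e3⟩
    have hk := key x hx e1
    rw [e2, zero_mul] at hk
    exact lt_irrefl 0 hk
end

section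
/- (Tait–Kneser) Let γ : [a,b] → ℝ² be a smooth unit-speed plane curve with strictly positive and strictly monotone increasing curvature κ(s). Then the osculating disks are strictly nested: for a ≤ s₁ < s₂ ≤ b, the closed osculating disk at s₂ is contained in the open osculating disk at s₁. In particular, γ(s) lies in the open osculating disk at a for all s > a, and lies outside the closed osculating disk at b for all s < b. -/
open Real Set Metric Filter Topology MeasureTheory intervalIntegral
open scoped RealInnerProductSpace ContDiff

private lemma tk_expand {T N : EuclideanSpace ℝ (Fin 2)} (hT : ‖T‖ = 1) (hN : ‖N‖ = 1)
    (hTN : ⟪T, N⟫ = 0) (v : EuclideanSpace ℝ (Fin 2)) :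
    v = ⟪v, T⟫ • T + ⟪v, N⟫ • N := by
  have hTself : ⟪T, T⟫ = 1 := by
    rw [real_inner_self_eq_norm_mul_norm, hT]; norm_num
  have hNself : ⟪N, N⟫ = 1 := by
    rw [real_inner_self_eq_norm_mul_norm, hN]; norm_num
  have hNT : ⟪N, T⟫ = 0 := by rw [real_inner_comm]; exact hTN
  have hon : Orthonormal ℝ ![T, N] := by
    rw [orthonormal_iff_ite]
    intro i j
    fin_cases i <;> fin_cases j <;>
      simp only [Matrix.cons_val_zero, Matrix.cons_val_one, Matrix.head_cons, Fin.mk_zero,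
        Fin.mk_one] <;>
      simp only [hTself, hNself, hTN, hNT, if_true, if_false] <;> norm_num
  have hsp : Submodule.span ℝ (Set.range ![T, N]) = ⊤ :=
    hon.linearIndependent.span_eq_top_of_card_eq_finrank (by simp)
  have hrange : Set.range ![T, N] = {T, N} := by
    simp [Matrix.range_cons, Matrix.range_empty, Set.pair_comm]
  set w := v - (⟪v, T⟫ • T + ⟪v, N⟫ • N) with hw
  have hwT : ⟪w, T⟫ = 0 := by
    simp only [hw, inner_sub_left, inner_add_left, real_inner_smul_left, hTself, hNT]; ring
  have hwN : ⟪w, N⟫ = 0 := by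
    simp only [hw, inner_sub_left, inner_add_left, real_inner_smul_left, hNself, hTN]; ring
  have hwmem : w ∈ Submodule.span ℝ ({T, N} : Set (EuclideanSpace ℝ (Fin 2))) := by
    rw [← hrange, hsp]; trivial
  obtain ⟨c, d, hcd⟩ := Submodule.mem_span_pair.mp hwmem
  have hww : ⟪w, w⟫ = 0 := by
    nth_rewrite 1 [← hcd]
    rw [inner_add_left, real_inner_smul_left, real_inner_smul_left, real_inner_comm w T, real_inner_comm w N, hwT, hwN]
    ring
  have hw0 : w = 0 := by rwa [inner_self_eq_zero] at hww
  have h := sub_eq_zero.mp hw0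
  exact h

private lemma tk_key (a b : ℝ) (γ N : ℝ → EuclideanSpace ℝ (Fin 2)) (κ : ℝ → ℝ)
    (hγ : ContDiff ℝ (⊤ : ℕ∞) γ) (hN : ContDiff ℝ (⊤ : ℕ∞) N)
    (hunit : ∀ s, ‖deriv γ s‖ = 1)
    (hNunit : ∀ s, ‖N s‖ = 1)
    (horth : ∀ s, ⟪deriv γ s, N s⟫ = 0)
    (hfrenet : ∀ s, deriv (deriv γ) s = κ s • N s)
    (hκpos : ∀ s ∈ Icc a b, 0 < κ s)
    (hκmono : StrictMonoOn κ (Icc a b)) :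
    ∀ s₁ ∈ Icc a b, ∀ s₂ ∈ Icc a b, s₁ < s₂ →
      ‖(γ s₂ + (κ s₂)⁻¹ • N s₂) - (γ s₁ + (κ s₁)⁻¹ • N s₁)‖ < (κ s₁)⁻¹ - (κ s₂)⁻¹ := by
  intro s₁ h₁ s₂ h₂ h₁₂
  have hab : a < b := lt_of_le_of_lt h₁.1 (lt_of_lt_of_le h₁₂ h₂.2)
  -- basic differentiability
  have hγ' : ContDiff ℝ ∞ γ := hγ.of_le (by simp)
  have hN' : ContDiff ℝ ∞ N := hN.of_le (by simp)
  have h1i : (∞ : WithTop ℕ∞) ≠ 0 := by simp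
  have hγd : Differentiable ℝ γ := hγ'.differentiable h1i
  have hdγ : ContDiff ℝ ∞ (deriv γ) := (contDiff_infty_iff_deriv.mp hγ').2
  have hddγ : ContDiff ℝ ∞ (deriv (deriv γ)) := (contDiff_infty_iff_deriv.mp hdγ).2
  have hNd : Differentiable ℝ N := hN'.differentiable h1i
  have hT : ∀ s, HasDerivAt γ (deriv γ s) s := fun s => (hγd s).hasDerivAt
  have hNder : ∀ s, HasDerivAt N (deriv N s) s := fun s => (hNd s).hasDerivAt
  have hTder : ∀ s, HasDerivAt (deriv γ) (κ s • N s) s := fun s =>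
    (hfrenet s) ▸ ((hdγ.differentiable h1i) s).hasDerivAt
  have hNself : ∀ s, ⟪N s, N s⟫ = 1 := fun s => by
    rw [real_inner_self_eq_norm_mul_norm, hNunit s]; norm_num
  -- κ is smooth
  have hκeq : κ = fun s => ⟪deriv (deriv γ) s, N s⟫ := by
    funext s
    rw [hfrenet s, real_inner_smul_left, hNself s, mul_one]
  have hκc : ContDiff ℝ ∞ κ := by
    rw [hκeq]; exact hddγ.inner ℝ hN'
  have hκd : Differentiable ℝ κ := hκc.differentiable h1i
  have hκder : ∀ s, HasDerivAt κ (deriv κ s) s := fun s => (hκd s).hasDerivAt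
  have hκ'cont : Continuous (deriv κ) := ((contDiff_infty_iff_deriv.mp hκc).2).continuous
  -- inner product derivatives
  have hNN' : ∀ s, ⟪N s, deriv N s⟫ = 0 := by
    intro s
    have h1 : HasDerivAt (fun t => ⟪N t, N t⟫) (⟪N s, deriv N s⟫ + ⟪deriv N s, N s⟫) s :=
      (hNder s).inner ℝ (hNder s)
    have h2 : (fun t => ⟪N t, N t⟫) = fun _ => (1 : ℝ) := funext fun t => hNself t
    rw [h2] at h1
    have h3 := (hasDerivAt_const s (1 : ℝ)).unique h1
    have h4 : ⟪deriv N s, N s⟫ = ⟪N s, deriv N s⟫ := real_inner_comm _ _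
    linarith [h3, h4]
  have hTN' : ∀ s, ⟪deriv γ s, deriv N s⟫ = -κ s := by
    intro s
    have h1 : HasDerivAt (fun t => ⟪deriv γ t, N t⟫)
        (⟪deriv γ s, deriv N s⟫ + ⟪κ s • N s, N s⟫) s := (hTder s).inner ℝ (hNder s)
    have h2 : (fun t => ⟪deriv γ t, N t⟫) = fun _ => (0 : ℝ) := funext fun t => horth t
    rw [h2] at h1
    have h3 := (hasDerivAt_const s (0 : ℝ)).unique h1
    rw [real_inner_smul_left, hNself s] at h3
    linarith [h3]
  -- N' = -κ T
  have hNderiv : ∀ s, deriv N s = -κ s • deriv γ s := by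
    intro s
    have hexp := tk_expand (hunit s) (hNunit s) (horth s) (deriv N s)
    have hc1 : ⟪deriv N s, deriv γ s⟫ = -κ s := by
      rw [real_inner_comm]; exact hTN' s
    have hc2 : ⟪deriv N s, N s⟫ = 0 := by
      rw [real_inner_comm]; exact hNN' s
    rw [hc1, hc2] at hexp
    simpa using hexp
  -- derivative of the centre curve
  have hcder : ∀ s, κ s ≠ 0 →
      HasDerivAt (fun t => γ t + (κ t)⁻¹ • N t) ((-deriv κ s / κ s ^ 2) • N s) s := by
    intro s hs
    have h1 : HasDerivAt (fun t => (κ t)⁻¹) (-deriv κ s / κ s ^ 2) s := (hκder s).inv hs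
    have h2 : HasDerivAt (fun t => (κ t)⁻¹ • N t)
        ((κ s)⁻¹ • deriv N s + (-deriv κ s / κ s ^ 2) • N s) s := h1.smul (hNder s)
    have h3 := (hT s).add h2
    have h4 : (κ s)⁻¹ • deriv N s = -deriv γ s := by
      rw [hNderiv s, smul_smul]
      rw [show (κ s)⁻¹ * -κ s = -1 by field_simp]
      simp
    rw [h4] at h3
    refine h3.congr_deriv ?_
    abel
  -- nonnegativity of deriv κ on Icc a b
  have hd0 : ∀ t ∈ Icc a b, 0 ≤ deriv κ t := by
    intro t ht
    rcases lt_or_eq_of_le ht.2 with htb | htb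
    · have h1 : Tendsto (slope κ t) (𝓝[≠] t) (𝓝 (deriv κ t)) :=
        hasDerivAt_iff_tendsto_slope.mp (hκder t)
      have h2 : Tendsto (slope κ t) (𝓝[>] t) (𝓝 (deriv κ t)) :=
        h1.mono_left (nhdsWithin_mono t fun x hx => ne_of_gt hx)
      refine ge_of_tendsto h2 ?_
      filter_upwards [Ioo_mem_nhdsGT_of_mem ⟨le_refl t, htb⟩] with x hx
      rw [slope_def_field]
      have hxI : x ∈ Icc a b := ⟨ht.1.trans hx.1.le, hx.2.le⟩
      have := hκmono ht hxI hx.1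
      have hd : 0 < x - t := sub_pos.mpr hx.1
      exact div_nonneg (by linarith) hd.le
    · have h1 : Tendsto (slope κ t) (𝓝[≠] t) (𝓝 (deriv κ t)) :=
        hasDerivAt_iff_tendsto_slope.mp (hκder t)
      have h2 : Tendsto (slope κ t) (𝓝[<] t) (𝓝 (deriv κ t)) :=
        h1.mono_left (nhdsWithin_mono t fun x hx => ne_of_lt hx)
      refine ge_of_tendsto h2 ?_
      have hat : a < t := htb ▸ hab
      filter_upwards [Ioo_mem_nhdsLT_of_mem ⟨hat, le_refl t⟩] with x hx
      rw [slope_def_field]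
      have hxI : x ∈ Icc a b := ⟨hx.1.le, hx.2.le.trans ht.2⟩
      have := hκmono hxI ht hx.2
      have hd : x - t < 0 := sub_neg.mpr hx.2
      exact div_nonneg_of_nonpos (by linarith) hd.le
  -- interval setup
  have hsub : Icc s₁ s₂ ⊆ Icc a b := Icc_subset_Icc h₁.1 h₂.2
  have hκne : ∀ t ∈ Icc s₁ s₂, κ t ≠ 0 := fun t ht => (hκpos t (hsub ht)).ne'
  set f : ℝ → EuclideanSpace ℝ (Fin 2) := fun t => (-deriv κ t / κ t ^ 2) • N t with hfdef
  set g : ℝ → ℝ := fun t => deriv κ t / κ t ^ 2 with hgdef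
  have hgcont : ContinuousOn g (Icc s₁ s₂) :=
    hκ'cont.continuousOn.div ((hκc.continuous.pow 2).continuousOn)
      (fun t ht => pow_ne_zero 2 (hκne t ht))
  have hr'eq : (fun t => -deriv κ t / κ t ^ 2) = fun t => -(g t) :=
    funext fun t => neg_div _ _
  have hr'cont : ContinuousOn (fun t => -deriv κ t / κ t ^ 2) (Icc s₁ s₂) := by
    rw [hr'eq]; exact hgcont.neg
  have hfcont : ContinuousOn f (Icc s₁ s₂) := hr'cont.smul hN.continuous.continuousOn
  have hfint : IntervalIntegrable f volume s₁ s₂ := hfcont.intervalIntegrable_of_Icc h₁₂.le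
  have FTCc : ∫ t in s₁..s₂, f t
      = (γ s₂ + (κ s₂)⁻¹ • N s₂) - (γ s₁ + (κ s₁)⁻¹ • N s₁) :=
    intervalIntegral.integral_eq_sub_of_hasDerivAt
      (fun t ht => hcder t (hκne t (by rwa [uIcc_of_le h₁₂.le] at ht))) hfint
  have FTCg : ∫ t in s₁..s₂, g t = (κ s₁)⁻¹ - (κ s₂)⁻¹ := by
    have hder : ∀ t ∈ uIcc s₁ s₂, HasDerivAt (fun y => -(κ y)⁻¹) (g t) t := by
      intro t ht
      have h1 := ((hκder t).inv (hκne t (by rwa [uIcc_of_le h₁₂.le] at ht))).neg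
      refine h1.congr_deriv ?_
      rw [hgdef]
      simp [neg_div]
    have h2 := intervalIntegral.integral_eq_sub_of_hasDerivAt hder
      (hgcont.intervalIntegrable_of_Icc h₁₂.le)
    rw [h2]; ring
  have hgnonneg : ∀ t ∈ Icc s₁ s₂, 0 ≤ g t := fun t ht =>
    div_nonneg (hd0 t (hsub ht)) (sq_nonneg _)
  have hrlt : (κ s₂)⁻¹ < (κ s₁)⁻¹ := inv_strictAnti₀ (hκpos s₁ h₁) (hκmono h₁ h₂ h₁₂)
  set X := (γ s₂ + (κ s₂)⁻¹ • N s₂) - (γ s₁ + (κ s₁)⁻¹ • N s₁) with hX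
  by_cases hX0 : X = 0
  · rw [hX0, norm_zero]; linarith
  have hXpos : 0 < ‖X‖ := norm_pos_iff.mpr hX0
  set u := ‖X‖⁻¹ • X with hu
  have hunorm : ‖u‖ = 1 := by
    rw [hu, norm_smul, norm_inv, norm_norm, inv_mul_cancel₀ hXpos.ne']
  have hinnerX : ⟪u, X⟫ = ‖X‖ := by
    rw [hu, real_inner_smul_left, real_inner_self_eq_norm_mul_norm]
    field_simp
  have hfval : ∀ t, ⟪u, f t⟫ = -(g t) * ⟪u, N t⟫ := by
    intro t
    rw [hfdef]
    simp only []
    rw [real_inner_smul_right, neg_div, hgdef]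
  have hstep1 : ∫ t in s₁..s₂, ⟪u, f t⟫ = ‖X‖ := by
    rw [intervalIntegral.integral_of_le h₁₂.le, integral_inner hfint.1 u,
      ← intervalIntegral.integral_of_le h₁₂.le, FTCc, hinnerX]
  have hstep2 : ∫ t in s₁..s₂, ⟪u, f t⟫ < ∫ t in s₁..s₂, g t := by
    apply intervalIntegral.integral_lt_integral_of_continuousOn_of_le_of_exists_lt h₁₂
      (continuousOn_const.inner hfcont) hgcont
    · -- pointwise ≤ on Ioc
      intro t ht
      have htI : t ∈ Icc s₁ s₂ := Ioc_subset_Icc_self ht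
      have hq := abs_real_inner_le_norm u (N t)
      rw [hunorm, hNunit t, one_mul] at hq
      have hp := hgnonneg t htI
      rw [hfval t]
      nlinarith [abs_le.mp hq]
    · -- strict at one point
      have ht₀ : ∃ t₀ ∈ Ioo s₁ s₂, 0 < deriv κ t₀ := by
        by_contra hcon
        push_neg at hcon
        have hzero : ∀ t ∈ Ioo s₁ s₂, deriv κ t = 0 := fun t ht =>
          le_antisymm (hcon t ht) (hd0 t (hsub (Ioo_subset_Icc_self ht)))
        have hFTCκ : ∫ t in s₁..s₂, deriv κ t = κ s₂ - κ s₁ :=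
          intervalIntegral.integral_eq_sub_of_hasDerivAt (fun t _ => hκder t)
            (hκ'cont.intervalIntegrable s₁ s₂)
        have hzero' : ∫ t in s₁..s₂, deriv κ t = 0 := by
          rw [intervalIntegral.integral_of_le h₁₂.le,
            ← Measure.restrict_congr_set Ioo_ae_eq_Ioc]
          rw [setIntegral_congr_fun measurableSet_Ioo hzero]
          simp
        have := hκmono h₁ h₂ h₁₂
        rw [hFTCκ] at hzero'
        linarith
      obtain ⟨t₀, ht₀I, ht₀pos⟩ := ht₀
      set U := Ioo s₁ s₂ ∩ {t | 0 < deriv κ t} with hUdef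
      have hUopen : IsOpen U := isOpen_Ioo.inter (isOpen_lt continuous_const hκ'cont)
      have ht₀U : t₀ ∈ U := ⟨ht₀I, ht₀pos⟩
      have hN2 : ∃ t₁ ∈ U, N t₁ ≠ -u := by
        by_contra hcon
        push_neg at hcon
        have hev : N =ᶠ[𝓝 t₀] fun _ => -u :=
          Filter.eventually_of_mem (hUopen.mem_nhds ht₀U) hcon
        have hdeq := hev.deriv_eq
        rw [deriv_const] at hdeq
        have hder := hNderiv t₀
        rw [hdeq] at hder
        have ht₀ab : t₀ ∈ Icc a b := hsub (Ioo_subset_Icc_self ht₀I)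
        have hpos := hκpos t₀ ht₀ab
        have hnrm : ‖(-κ t₀ : ℝ) • deriv γ t₀‖ = κ t₀ := by
          rw [norm_smul, hunit t₀, mul_one, Real.norm_eq_abs, abs_neg, abs_of_pos hpos]
        rw [← hder, norm_zero] at hnrm
        linarith
      obtain ⟨t₁, ht₁U, ht₁N⟩ := hN2
      have ht₁I : t₁ ∈ Icc s₁ s₂ := Ioo_subset_Icc_self ht₁U.1
      refine ⟨t₁, ht₁I, ?_⟩
      have ht₁ab : t₁ ∈ Icc a b := hsub ht₁I
      have hp : 0 < g t₁ := div_pos ht₁U.2 (pow_pos (hκpos t₁ ht₁ab) 2)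
      have hq1 : ⟪u, N t₁⟫ ≠ -1 := by
        intro hq
        have hcomm : ⟪N t₁, u⟫ = -1 := by rw [real_inner_comm]; exact hq
        have hsum : ‖N t₁ + u‖ ^ 2 = 0 := by
          rw [norm_add_sq_real, hcomm, hNunit t₁, hunorm]; ring
        have : N t₁ + u = 0 := by
          have := sq_eq_zero_iff.mp hsum
          exact norm_eq_zero.mp this
        exact ht₁N (by linear_combination (norm := module) this)
      have hq := abs_real_inner_le_norm u (N t₁)
      rw [hunorm, hNunit t₁, one_mul] at hq
      have hge : -1 ≤ ⟪u, N t₁⟫ := (abs_le.mp hq).1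
      have hgt : -1 < ⟪u, N t₁⟫ := lt_of_le_of_ne hge (Ne.symm hq1)
      rw [hfval t₁]
      nlinarith
  rw [hstep1, FTCg] at hstep2
  exact hstep2

theorem stmt_5 (a b : ℝ) (hab : a < b)
    (γ N : ℝ → EuclideanSpace ℝ (Fin 2)) (κ : ℝ → ℝ)
    (hγ : ContDiff ℝ (⊤ : ℕ∞) γ) (hN : ContDiff ℝ (⊤ : ℕ∞) N)
    (hunit : ∀ s, ‖deriv γ s‖ = 1)
    (hNunit : ∀ s, ‖N s‖ = 1)
    (horth : ∀ s, inner ℝ (deriv γ s) (N s) = (0 : ℝ))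
    (hfrenet : ∀ s, deriv (deriv γ) s = κ s • N s)
    (hκpos : ∀ s ∈ Icc a b, 0 < κ s)
    (hκmono : StrictMonoOn κ (Icc a b)) :
    (∀ s₁ ∈ Icc a b, ∀ s₂ ∈ Icc a b, s₁ < s₂ →
      closedBall (γ s₂ + (κ s₂)⁻¹ • N s₂) (κ s₂)⁻¹ ⊆
        ball (γ s₁ + (κ s₁)⁻¹ • N s₁) (κ s₁)⁻¹) ∧
    (∀ s ∈ Icc a b, a < s → γ s ∈ ball (γ a + (κ a)⁻¹ • N a) (κ a)⁻¹) ∧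
    (∀ s ∈ Icc a b, s < b → γ s ∉ closedBall (γ b + (κ b)⁻¹ • N b) (κ b)⁻¹) := by
  have key := tk_key a b γ N κ hγ hN hunit hNunit horth hfrenet hκpos hκmono
  have hrpos : ∀ s ∈ Icc a b, 0 < (κ s)⁻¹ := fun s hs => inv_pos.mpr (hκpos s hs)
  have hself : ∀ s ∈ Icc a b, dist (γ s) (γ s + (κ s)⁻¹ • N s) = (κ s)⁻¹ := by
    intro s hs
    rw [dist_eq_norm]
    have h1 : γ s - (γ s + (κ s)⁻¹ • N s) = -((κ s)⁻¹ • N s) := by abel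
    rw [h1, norm_neg, norm_smul, hNunit s, mul_one, Real.norm_eq_abs,
      abs_of_pos (hrpos s hs)]
  have part1 : ∀ s₁ ∈ Icc a b, ∀ s₂ ∈ Icc a b, s₁ < s₂ →
      closedBall (γ s₂ + (κ s₂)⁻¹ • N s₂) (κ s₂)⁻¹ ⊆
        ball (γ s₁ + (κ s₁)⁻¹ • N s₁) (κ s₁)⁻¹ := by
    intro s₁ h₁ s₂ h₂ h₁₂ p hp
    rw [mem_closedBall] at hp
    rw [mem_ball]
    have htri := dist_triangle p (γ s₂ + (κ s₂)⁻¹ • N s₂) (γ s₁ + (κ s₁)⁻¹ • N s₁)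
    have hd : dist (γ s₂ + (κ s₂)⁻¹ • N s₂) (γ s₁ + (κ s₁)⁻¹ • N s₁)
        = ‖(γ s₂ + (κ s₂)⁻¹ • N s₂) - (γ s₁ + (κ s₁)⁻¹ • N s₁)‖ := dist_eq_norm _ _
    have hk := key s₁ h₁ s₂ h₂ h₁₂
    rw [hd] at htri
    linarith
  refine ⟨part1, ?_, ?_⟩
  · intro s hs has
    have hmem : γ s ∈ closedBall (γ s + (κ s)⁻¹ • N s) (κ s)⁻¹ := by
      rw [mem_closedBall, hself s hs]
    exact part1 a ⟨le_refl a, hab.le⟩ s hs has hmem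
  · intro s hs hsb hmem
    rw [mem_closedBall] at hmem
    have hk := key s hs b ⟨hab.le, le_refl b⟩ hsb
    have htri := dist_triangle (γ s) (γ b + (κ b)⁻¹ • N b) (γ s + (κ s)⁻¹ • N s)
    have hd : dist (γ b + (κ b)⁻¹ • N b) (γ s + (κ s)⁻¹ • N s)
        = ‖(γ b + (κ b)⁻¹ • N b) - (γ s + (κ s)⁻¹ • N s)‖ := dist_eq_norm _ _
    have hs' := hself s hs
    rw [hd] at htri
    linarith
end

section
/- Let D : [0, L] → ℝ² be a smooth unit-speed convex arc starting at the origin, lying in the closed positive quadrant, with length L ≤ 1, whose (positive) curvature K(s) is strictly monotone increasing in arclength s, and let n(s) be the outward unit normal. Let P(s) = D(s) · n(s). Then P(s) < K(s) for all s ∈ (0, L]. -/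
open Real Set

lemma span2 (T N w : EuclideanSpace ℝ (Fin 2)) (hT : ‖T‖ = 1) (hN : ‖N‖ = 1)
    (hTN : inner ℝ T N = (0:ℝ)) (h1 : inner ℝ T w = (0:ℝ)) (h2 : inner ℝ N w = (0:ℝ)) : w = 0 := by
  have hT2 : inner ℝ T T = (1:ℝ) := by rw [real_inner_self_eq_norm_sq, hT]; norm_num
  have hN2 : inner ℝ N N = (1:ℝ) := by rw [real_inner_self_eq_norm_sq, hN]; norm_num
  simp only [PiLp.inner_apply, RCLike.inner_apply, conj_trivial, Fin.sum_univ_two] at hT2 hN2 hTN h1 h2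
  have det2 : (T 0 * N 1 - T 1 * N 0)^2 = 1 := by nlinarith
  ext i
  fin_cases i
  · show w 0 = 0
    have : w 0 * (T 0 * N 1 - T 1 * N 0) = 0 := by linear_combination N 1 * h1 - T 1 * h2
    nlinarith [sq_nonneg (w 0)]
  · show w 1 = 0
    have : w 1 * (T 0 * N 1 - T 1 * N 0) = 0 := by linear_combination T 0 * h2 - N 0 * h1
    nlinarith [sq_nonneg (w 1)]

theorem stmt_7 (L : ℝ) (hL0 : 0 < L) (hL : L ≤ 1)
    (D n : ℝ → EuclideanSpace ℝ (Fin 2)) (K : ℝ → ℝ)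
    (hD : ContDiff ℝ (⊤ : ℕ∞) D) (hn : ContDiff ℝ (⊤ : ℕ∞) n)
    (hD0 : D 0 = 0)
    (hunit : ∀ s, ‖deriv D s‖ = 1)
    (hquad : ∀ s ∈ Icc 0 L, 0 ≤ D s 0 ∧ 0 ≤ D s 1)
    (hnunit : ∀ s, ‖n s‖ = 1)
    (hnorth : ∀ s, inner ℝ (deriv D s) (n s) = (0 : ℝ))
    (hfrenet : ∀ s, deriv (deriv D) s = -(K s) • n s)
    (hKpos : ∀ s ∈ Icc 0 L, 0 < K s)
    (hKmono : StrictMonoOn K (Icc 0 L)) :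
    ∀ s ∈ Ioc 0 L, inner ℝ (D s) (n s) < K s := by
  have hDd : Differentiable ℝ D := hD.differentiable (by simp)
  have hnd : Differentiable ℝ n := hn.differentiable (by simp)
  have hDd' : Differentiable ℝ (deriv D) := (contDiff_infty_iff_deriv.mp (hD.of_le (by exact_mod_cast le_top))).2.differentiable (by simp)
  -- derivative of n
  have hn' : ∀ s, deriv n s = K s • deriv D s := by
    intro s
    have hDT : HasDerivAt (deriv D) (-(K s) • n s) s := by
      rw [← hfrenet s]; exact (hDd' s).hasDerivAt
    have hnat : HasDerivAt n (deriv n s) s := (hnd s).hasDerivAt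
    have hDat : HasDerivAt D (deriv D s) s := (hDd s).hasDerivAt
    -- inner ℝ (deriv D) n = 0 differentiated
    have h1 : HasDerivAt (fun t => (inner ℝ (deriv D t) (n t) : ℝ))
        (inner ℝ (deriv D s) (deriv n s) + inner ℝ (-(K s) • n s) (n s)) s := by
      exact hDT.inner ℝ hnat
    have h1' : HasDerivAt (fun t => (inner ℝ (deriv D t) (n t) : ℝ)) 0 s := by
      have : (fun t => (inner ℝ (deriv D t) (n t) : ℝ)) = fun _ => 0 := funext hnorth
      rw [this]; exact hasDerivAt_const s 0
    have e1 : inner ℝ (deriv D s) (deriv n s) + inner ℝ (-(K s) • n s) (n s) = (0:ℝ) :=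
      h1.unique h1'
    have hnn : inner ℝ (n s) (n s) = (1:ℝ) := by
      rw [real_inner_self_eq_norm_sq, hnunit]; norm_num
    rw [real_inner_smul_left, hnn] at e1
    have hTn' : inner ℝ (deriv D s) (deriv n s) = K s := by linarith
    -- inner ℝ n n = 1 differentiated
    have h2 : HasDerivAt (fun t => (inner ℝ (n t) (n t) : ℝ))
        (inner ℝ (n s) (deriv n s) + inner ℝ (deriv n s) (n s)) s := hnat.inner ℝ hnat
    have h2' : HasDerivAt (fun t => (inner ℝ (n t) (n t) : ℝ)) 0 s := by
      have : (fun t => (inner ℝ (n t) (n t) : ℝ)) = fun _ => 1 := by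
        funext t; rw [real_inner_self_eq_norm_sq, hnunit]; norm_num
      rw [this]; exact hasDerivAt_const s 1
    have e2 : inner ℝ (n s) (deriv n s) + inner ℝ (deriv n s) (n s) = (0:ℝ) := h2.unique h2'
    rw [real_inner_comm (n s)] at e2
    have hnn' : inner ℝ (n s) (deriv n s) = (0:ℝ) := by linarith
    -- span argument
    have hw : deriv n s - K s • deriv D s = 0 := by
      apply span2 (deriv D s) (n s) _ (hunit s) (hnunit s) (hnorth s)
      · rw [inner_sub_right, real_inner_smul_right, hTn',
          real_inner_self_eq_norm_sq, hunit s]; ring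
      · rw [inner_sub_right, real_inner_smul_right, hnn',
          real_inner_comm, hnorth s]; ring
    have := sub_eq_zero.mp hw
    exact this
  -- P and its derivative
  set P : ℝ → ℝ := fun t => inner ℝ (D t) (n t) with hP
  have hPderiv : ∀ t, HasDerivAt P (K t * inner ℝ (D t) (deriv D t)) t := by
    intro t
    have h := ((hDd t).hasDerivAt).inner ℝ ((hnd t).hasDerivAt)
    have : inner ℝ (D t) (deriv n t) + inner ℝ (deriv D t) (n t)
        = K t * inner ℝ (D t) (deriv D t) := by
      rw [hn' t, real_inner_smul_right, hnorth t]; ring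
    rw [this] at h; exact h
  -- ‖D t‖ ≤ t for t ≥ 0
  have hDnorm : ∀ t, 0 ≤ t → ‖D t‖ ≤ t := by
    intro t ht
    have := Convex.norm_image_sub_le_of_norm_deriv_le (f := D) (C := 1)
      (fun x _ => hDd x) (fun x _ => le_of_eq (hunit x)) convex_univ (mem_univ 0) (mem_univ t)
    rw [hD0, sub_zero] at this
    calc ‖D t‖ ≤ 1 * ‖t - 0‖ := this
    _ = t := by rw [sub_zero, one_mul, Real.norm_eq_abs, abs_of_nonneg ht]
  intro s hs
  obtain ⟨hs0, hsL⟩ := hs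
  have hsmem : s ∈ Icc 0 L := ⟨le_of_lt hs0, hsL⟩
  have hKs : 0 < K s := hKpos s hsmem
  -- compare with g(t) = K s * t^2 / 2
  set F : ℝ → ℝ := fun t => K s / 2 * t^2 - P t with hF
  have hFderiv : ∀ t, HasDerivAt F (K s * t - K t * inner ℝ (D t) (deriv D t)) t := by
    intro t
    have h1 : HasDerivAt (fun y => K s / 2 * y ^ 2) (K s / 2 * (2 * t ^ 1)) t := by
      exact_mod_cast (hasDerivAt_pow 2 t).const_mul (K s / 2)
    have h2 := h1.sub (hPderiv t)
    refine h2.congr_deriv ?_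
    ring
  have hFmono : MonotoneOn F (Icc 0 s) := by
    apply monotoneOn_of_deriv_nonneg (convex_Icc 0 s)
      ((show Differentiable ℝ F from fun t => (hFderiv t).differentiableAt).continuous.continuousOn)
      (fun t _ => (hFderiv t).differentiableAt.differentiableWithinAt)
    intro t ht
    rw [interior_Icc] at ht
    rw [(hFderiv t).deriv]
    have ht0 : 0 < t := ht.1
    have hts : t < s := ht.2
    have htmem : t ∈ Icc 0 L := ⟨le_of_lt ht0, le_trans (le_of_lt hts) hsL⟩
    have hKt : 0 < K t := hKpos t htmem
    have hKts : K t ≤ K s := le_of_lt (hKmono htmem hsmem hts)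
    have hDT : inner ℝ (D t) (deriv D t) ≤ t := by
      calc (inner ℝ (D t) (deriv D t) : ℝ) ≤ ‖D t‖ * ‖deriv D t‖ := real_inner_le_norm _ _
      _ = ‖D t‖ := by rw [hunit, mul_one]
      _ ≤ t := hDnorm t (le_of_lt ht0)
    have h1 : K t * inner ℝ (D t) (deriv D t) ≤ K t * t := by
      exact mul_le_mul_of_nonneg_left hDT (le_of_lt hKt)
    have h2 : K t * t ≤ K s * t := mul_le_mul_of_nonneg_right hKts ht0.le
    linarith
  have hF0 : F 0 = 0 := by simp [hF, hP, hD0]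
  have hle := hFmono (left_mem_Icc.mpr (le_of_lt hs0)) (right_mem_Icc.mpr (le_of_lt hs0)) (le_of_lt hs0)
  rw [hF0] at hle
  have hPs : P s ≤ K s / 2 * s^2 := by simp only [hF] at hle; linarith
  have hs1 : s ≤ 1 := hsL.trans hL
  have : K s / 2 * s^2 < K s := by nlinarith [mul_pos hKs hs0]
  calc (inner ℝ (D s) (n s) : ℝ) = P s := rfl
  _ ≤ K s / 2 * s^2 := hPs
  _ < K s := this
end

section
/- Suppose P, K : ℝ × I → ℝ are smooth and satisfy: P_τ = P/2 − K, K_τ = −K/2 + K² K_{θθ} + K³, and P + P_{θθ} = 1/K (with K > 0). Define ν = P/2 − K. Then ν satisfies ν_τ = K² ν_{θθ} + (K² + 1/2) ν. -/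
open Real Set

private lemma slice_fst {F : ℝ → ℝ → ℝ} (hF : ContDiff ℝ (⊤ : ℕ∞) (Function.uncurry F)) (τ : ℝ) :
    ContDiff ℝ (⊤ : ℕ∞) (fun x => F x τ) :=
  hF.comp (contDiff_id.prodMk contDiff_const)

private lemma slice_snd {F : ℝ → ℝ → ℝ} (hF : ContDiff ℝ (⊤ : ℕ∞) (Function.uncurry F)) (θ : ℝ) :
    ContDiff ℝ (⊤ : ℕ∞) (fun t => F θ t) :=
  hF.comp (contDiff_const.prodMk contDiff_id)

theorem stmt_12 (I : Set ℝ) (hI : IsOpen I)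
    (P K : ℝ → ℝ → ℝ)
    (hP : ContDiff ℝ (⊤ : ℕ∞) (Function.uncurry P))
    (hKsm : ContDiff ℝ (⊤ : ℕ∞) (Function.uncurry K))
    (hKpos : ∀ θ, ∀ τ ∈ I, 0 < K θ τ)
    (hPτ : ∀ θ, ∀ τ ∈ I, deriv (fun τ' => P θ τ') τ = P θ τ / 2 - K θ τ)
    (hKτ : ∀ θ, ∀ τ ∈ I, deriv (fun τ' => K θ τ') τ =
      -(K θ τ) / 2 + (K θ τ) ^ 2 * deriv (deriv (fun θ' => K θ' τ)) θ + (K θ τ) ^ 3)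
    (hsupp : ∀ θ, ∀ τ ∈ I, P θ τ + deriv (deriv (fun θ' => P θ' τ)) θ = 1 / K θ τ)
    (ν : ℝ → ℝ → ℝ) (hν : ν = fun θ τ => P θ τ / 2 - K θ τ) :
    ∀ θ, ∀ τ ∈ I, deriv (fun τ' => ν θ τ') τ =
      (K θ τ) ^ 2 * deriv (deriv (fun θ' => ν θ' τ)) θ + ((K θ τ) ^ 2 + 1 / 2) * ν θ τ := by
  subst hν
  intro θ τ hτ
  -- differentiability facts
  have hPτd : DifferentiableAt ℝ (fun t => P θ t) τ :=
    ((slice_snd hP θ).differentiable (by simp)).differentiableAt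
  have hKτd : DifferentiableAt ℝ (fun t => K θ t) τ :=
    ((slice_snd hKsm θ).differentiable (by simp)).differentiableAt
  have hPθ : ContDiff ℝ (⊤ : ℕ∞) (fun x => P x τ) := slice_fst hP τ
  have hKθ : ContDiff ℝ (⊤ : ℕ∞) (fun x => K x τ) := slice_fst hKsm τ
  have hPθ' : ContDiff ℝ (⊤:ℕ∞) (deriv (fun x => P x τ)) :=
    (contDiff_infty_iff_deriv.mp (hPθ.of_le (by simp))).2
  have hKθ' : ContDiff ℝ (⊤:ℕ∞) (deriv (fun x => K x τ)) :=
    (contDiff_infty_iff_deriv.mp (hKθ.of_le (by simp))).2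
  -- τ-derivative of ν
  have e1 : deriv (fun τ' => P θ τ' / 2 - K θ τ') τ
      = deriv (fun t => P θ t) τ / 2 - deriv (fun t => K θ t) τ := by
    rw [deriv_fun_sub (hPτd.div_const 2) hKτd, deriv_div_const]
  -- θ-derivative of ν
  have e2 : deriv (fun θ' => P θ' τ / 2 - K θ' τ)
      = fun x => deriv (fun x => P x τ) x / 2 - deriv (fun x => K x τ) x := by
    funext x
    rw [deriv_fun_sub ((hPθ.differentiable (by simp) x).div_const 2)
      (hKθ.differentiable (by simp) x), deriv_div_const]
  have e3 : deriv (deriv (fun θ' => P θ' τ / 2 - K θ' τ)) θ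
      = deriv (deriv (fun x => P x τ)) θ / 2 - deriv (deriv (fun x => K x τ)) θ := by
    rw [e2, deriv_fun_sub ((hPθ'.differentiable (by simp) θ).div_const 2)
      (hKθ'.differentiable (by simp) θ), deriv_div_const]
  have hk : K θ τ ≠ 0 := (hKpos θ τ hτ).ne'
  have hs := hsupp θ τ hτ
  have hs' : (P θ τ + deriv (deriv (fun θ' => P θ' τ)) θ) * K θ τ = 1 := by
    field_simp at hs
    linarith [hs]
  simp only [e1, e3, hPτ θ τ hτ, hKτ θ τ hτ]
  linear_combination (-(K θ τ) / 2) * hs'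
end
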